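/- arXiv:1802.06360 — 2 statements merged into one kernel-verified Lean document; each statement's English description precedes it below -/
import Mathlib

section
/- Let N be a positive natural number, ν ∈ (0,1) a real parameter, and ŷ : Fin N → ℝ a family of real scores, and let f(r) = (1/(N·ν)) · ∑_{n} max(0, r − ŷ_n) − r. Suppose r₀ ∈ ℝ satisfies the ν-quantile condition #{n : ŷ_n < r₀} ≤ ν·N ≤ #{n : ŷ_n ≤ r₀}, where # denotes cardinality viewed as a real number. Then r₀ is a global minimizer of f, i.e., f(r₀) ≤ f(r) for all r ∈ ℝ. (This is the theorem that the optimal bias r in the OC-NN alternating-minimization subproblem argmin_r (1/(N·ν))·∑_n max(0, r − ŷ_n) − r is given by the ν-th quantile of the scores ŷ_n.) -/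
open Finset

/-- If `r₀` satisfies the ν-quantile condition
`#{n : y n < r₀} ≤ ν·N ≤ #{n : y n ≤ r₀}`, then `r₀` is a global minimizer of
the OC-NN bias objective `f r = (1/(N·ν)) · ∑ n, max 0 (r − y n) − r`. -/
theorem ocnn_quantile_is_minimizer
    (N : ℕ) (hN : 0 < N) (ν : ℝ) (hν : ν ∈ Set.Ioo (0 : ℝ) 1)
    (y : Fin N → ℝ)
    (f : ℝ → ℝ) (hf : ∀ r, f r = (1 / (N * ν)) * ∑ n, max 0 (r - y n) - r)
    (r₀ : ℝ)
    (h₁ : ((Finset.univ.filter (fun n : Fin N => y n < r₀)).card : ℝ) ≤ ν * N)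
    (h₂ : ν * N ≤ ((Finset.univ.filter (fun n : Fin N => y n ≤ r₀)).card : ℝ)) :
    ∀ r : ℝ, f r₀ ≤ f r := by
  intro r
  have hc : (0:ℝ) < (N : ℝ) * ν := mul_pos (by exact_mod_cast hN) hν.1
  have key : (∑ n, max 0 (r₀ - y n)) - (N : ℝ) * ν * r₀
      ≤ (∑ n, max 0 (r - y n)) - (N : ℝ) * ν * r := by
    rcases le_or_gt r₀ r with hle | hlt
    · have hsum : ∑ n, (if y n ≤ r₀ then r - r₀ else 0)
          ≤ ∑ n, (max 0 (r - y n) - max 0 (r₀ - y n)) := by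
        apply Finset.sum_le_sum
        intro n _
        by_cases h : y n ≤ r₀
        · simp only [h, if_true]
          rw [max_eq_right (by linarith), max_eq_right (by linarith)]
          linarith
        · simp only [h, if_false]
          have : max 0 (r₀ - y n) ≤ max 0 (r - y n) :=
            max_le_max le_rfl (by linarith)
          linarith
      have hcard : ∑ n, (if y n ≤ r₀ then r - r₀ else 0)
          = ((Finset.univ.filter (fun n : Fin N => y n ≤ r₀)).card : ℝ) * (r - r₀) := by
        rw [← Finset.sum_filter, Finset.sum_const, nsmul_eq_mul]
      have hmul : (ν * (N : ℝ)) * (r - r₀)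
          ≤ ((Finset.univ.filter (fun n : Fin N => y n ≤ r₀)).card : ℝ) * (r - r₀) :=
        mul_le_mul_of_nonneg_right h₂ (by linarith)
      rw [Finset.sum_sub_distrib] at hsum
      nlinarith [hsum, hmul]
    · have hsum : ∑ n, (max 0 (r₀ - y n) - max 0 (r - y n))
          ≤ ∑ n, (if y n < r₀ then r₀ - r else 0) := by
        apply Finset.sum_le_sum
        intro n _
        by_cases h : y n < r₀
        · simp only [h, if_true]
          rw [max_eq_right (by linarith)]
          have h1 : r - y n ≤ max 0 (r - y n) := le_max_right _ _
          linarith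
        · simp only [h, if_false]
          have h1 : max 0 (r₀ - y n) = 0 := max_eq_left (by linarith)
          have h2 : (0:ℝ) ≤ max 0 (r - y n) := le_max_left _ _
          linarith
      have hcard : ∑ n, (if y n < r₀ then r₀ - r else 0)
          = ((Finset.univ.filter (fun n : Fin N => y n < r₀)).card : ℝ) * (r₀ - r) := by
        rw [← Finset.sum_filter, Finset.sum_const, nsmul_eq_mul]
      have hmul : ((Finset.univ.filter (fun n : Fin N => y n < r₀)).card : ℝ) * (r₀ - r)
          ≤ (ν * (N : ℝ)) * (r₀ - r) :=
        mul_le_mul_of_nonneg_right h₁ (by linarith)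
      rw [Finset.sum_sub_distrib] at hsum
      nlinarith [hsum, hmul]
  rw [hf r, hf r₀]
  have hcc : 1 / ((N : ℝ) * ν) * ((N : ℝ) * ν) = 1 := one_div_mul_cancel hc.ne'
  have hm := mul_le_mul_of_nonneg_left key (le_of_lt (one_div_pos.mpr hc))
  rw [mul_sub, mul_sub, ← mul_assoc, hcc, one_mul, ← mul_assoc, hcc, one_mul] at hm
  exact hm
end

section
/- Let N be a positive natural number, ν ∈ (0,1) a real parameter, and ŷ : Fin N → ℝ a family of real scores, and let f(r) = (1/(N·ν)) · ∑_{n} max(0, r − ŷ_n) − r. If r₀ ∈ ℝ is a global minimizer of f (i.e., f(r₀) ≤ f(r) for all r ∈ ℝ), then r₀ satisfies the ν-quantile condition #{n : ŷ_n < r₀} ≤ ν·N ≤ #{n : ŷ_n ≤ r₀}, where # denotes cardinality viewed as a real number. (Converse direction of the theorem identifying the optimal OC-NN bias with the ν-th quantile of the scores.) -/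
open Finset

/-- If `r₀` is a global minimizer of the OC-NN bias objective
`f r = (1/(N·ν)) · ∑ n, max 0 (r − y n) − r`, then `r₀` satisfies the
ν-quantile condition `#{n : y n < r₀} ≤ ν·N ≤ #{n : y n ≤ r₀}`. -/
theorem ocnn_minimizer_is_quantile
    (N : ℕ) (hN : 0 < N) (ν : ℝ) (hν : ν ∈ Set.Ioo (0 : ℝ) 1)
    (y : Fin N → ℝ)
    (f : ℝ → ℝ) (hf : ∀ r, f r = (1 / (N * ν)) * ∑ n, max 0 (r - y n) - r)
    (r₀ : ℝ) (hmin : ∀ r : ℝ, f r₀ ≤ f r) :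
    ((Finset.univ.filter (fun n : Fin N => y n < r₀)).card : ℝ) ≤ ν * N ∧
      ν * N ≤ ((Finset.univ.filter (fun n : Fin N => y n ≤ r₀)).card : ℝ) := by
  classical
  obtain ⟨hν0, hν1⟩ := hν
  have hNpos : (0 : ℝ) < N := by exact_mod_cast hN
  have hP : (0 : ℝ) < N * ν := mul_pos hNpos hν0
  -- choose a small ε avoiding all the scores
  have hexists : ∃ ε : ℝ, 0 < ε ∧ ∀ n : Fin N,
      (y n ≤ r₀ ∨ r₀ + ε ≤ y n) ∧ (y n ≤ r₀ - ε ∨ r₀ ≤ y n) := by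
    set T := ((univ : Finset (Fin N)).filter fun n => y n ≠ r₀).image
        (fun n => |y n - r₀|) with hT
    by_cases hne : T.Nonempty
    · refine ⟨T.min' hne, ?_, ?_⟩
      · have hposT : ∀ x ∈ T, 0 < x := by
          intro x hx
          rw [hT] at hx
          simp only [Finset.mem_image, Finset.mem_filter, Finset.mem_univ, true_and] at hx
          obtain ⟨n, hn, heq⟩ := hx
          rw [← heq]
          exact abs_pos.mpr (sub_ne_zero.mpr hn)
        exact hposT _ (T.min'_mem hne)
      · intro n
        by_cases h : y n = r₀
        · exact ⟨Or.inl (le_of_eq h), Or.inr (ge_of_eq h)⟩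
        · have hmemT : |y n - r₀| ∈ T := by
            rw [hT]
            simp only [Finset.mem_image, Finset.mem_filter, Finset.mem_univ, true_and]
            exact ⟨n, h, rfl⟩
          have hle := T.min'_le _ hmemT
          rcases lt_or_gt_of_ne h with hlt | hgt
          · have : |y n - r₀| = r₀ - y n := by
              rw [abs_sub_comm]; exact abs_of_pos (by linarith)
            have hle' := hle.trans this.le
            exact ⟨Or.inl (le_of_lt hlt), Or.inl (by linarith)⟩
          · have : |y n - r₀| = y n - r₀ := abs_of_pos (by linarith)
            have hle' := hle.trans this.le
            exact ⟨Or.inr (by linarith), Or.inr (le_of_lt hgt)⟩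
    · refine ⟨1, one_pos, fun n => ?_⟩
      have h : y n = r₀ := by
        by_contra h
        exact hne ⟨|y n - r₀|, by
          rw [hT]
          simp only [Finset.mem_image, Finset.mem_filter, Finset.mem_univ, true_and]
          exact ⟨n, h, rfl⟩⟩
      exact ⟨Or.inl (le_of_eq h), Or.inr (ge_of_eq h)⟩
  obtain ⟨ε, hε, hsep⟩ := hexists
  set S : ℝ := ∑ n, max 0 (r₀ - y n) with hS
  set d : ℝ := ((univ.filter (fun n : Fin N => y n ≤ r₀)).card : ℝ) with hd
  set c : ℝ := ((univ.filter (fun n : Fin N => y n < r₀)).card : ℝ) with hc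
  -- sum identity for r₀ + ε
  have sum1 : ∑ n, max 0 (r₀ + ε - y n) = S + ε * d := by
    have step : ∀ n ∈ (univ : Finset (Fin N)),
        max 0 (r₀ + ε - y n) = max 0 (r₀ - y n) + (if y n ≤ r₀ then ε else 0) := by
      intro n _
      rcases (hsep n).1 with h | h
      · rw [if_pos h, max_eq_right (by linarith), max_eq_right (by linarith)]
        ring
      · rw [if_neg (by linarith), max_eq_left (by linarith), max_eq_left (by linarith)]
        ring
    rw [Finset.sum_congr rfl step, Finset.sum_add_distrib]
    congr 1
    rw [Finset.sum_ite, Finset.sum_const, Finset.sum_const_zero, add_zero, nsmul_eq_mul, hd, mul_comm]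
  -- sum identity for r₀ - ε
  have hfiltereq : (univ.filter (fun n : Fin N => y n ≤ r₀ - ε))
      = (univ.filter (fun n : Fin N => y n < r₀)) := by
    apply Finset.filter_congr
    intro n _
    constructor
    · intro h; linarith
    · intro h
      rcases (hsep n).2 with h' | h' <;> [exact h'; linarith]
  have sum2 : S = (∑ n, max 0 (r₀ - ε - y n)) + ε * c := by
    have step : ∀ n ∈ (univ : Finset (Fin N)),
        max 0 (r₀ - y n) = max 0 (r₀ - ε - y n) + (if y n ≤ r₀ - ε then ε else 0) := by
      intro n _
      rcases (hsep n).2 with h | h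
      · rw [if_pos h, max_eq_right (by linarith), max_eq_right (by linarith)]
        ring
      · rw [if_neg (by linarith), max_eq_left (by linarith), max_eq_left (by linarith)]
        ring
    rw [hS, Finset.sum_congr rfl step, Finset.sum_add_distrib]
    congr 1
    rw [Finset.sum_ite, Finset.sum_const, Finset.sum_const_zero, add_zero, nsmul_eq_mul, hfiltereq, hc, mul_comm]
  constructor
  · -- left inequality: c ≤ ν * N, from f r₀ ≤ f (r₀ - ε)
    have h2 := hmin (r₀ - ε)
    rw [hf, hf, ← hS, sum2] at h2
    set S' : ℝ := ∑ n, max 0 (r₀ - ε - y n) with hS'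
    have expand : (1 / (N * ν)) * (S' + ε * c) = (1 / (N * ν)) * S' + (ε * c) / (N * ν) := by
      ring
    rw [expand] at h2
    have key : (ε * c) / (N * ν) ≤ ε := by linarith
    have key2 : ε * c ≤ ε * (N * ν) := (div_le_iff₀ hP).mp key
    have : c ≤ N * ν := le_of_mul_le_mul_left key2 hε
    linarith [mul_comm (N : ℝ) ν]
  · -- right inequality: ν * N ≤ d, from f r₀ ≤ f (r₀ + ε)
    have h1 := hmin (r₀ + ε)
    rw [hf, hf, ← hS, sum1] at h1
    have expand : (1 / (N * ν)) * (S + ε * d) = (1 / (N * ν)) * S + (ε * d) / (N * ν) := by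
      ring
    rw [expand] at h1
    have key : ε ≤ (ε * d) / (N * ν) := by linarith
    have key2 : ε * (N * ν) ≤ ε * d := (le_div_iff₀ hP).mp key
    have : N * ν ≤ d := le_of_mul_le_mul_left key2 hε
    linarith [mul_comm (N : ℝ) ν]
end
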